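/- arXiv:2004.10499 — 2 statements merged into one kernel-verified Lean document; each statement's English description precedes it below -/
import Mathlib

section
/- Let X, Y, Z be independent exponential random variables with rates λx, λy, λz > 0, and let K > 0, M, L ≥ 0, Λ > 0. Then Pr[X < Z·Y·K + Y·M + L and Y > Λ] = e^{−λy Λ} + (λy λz)/(λx K) · e^{−λx(L + Λ M) − λy Λ} · e^{μξ} · Ei(−μξ), where μ = λz + λx Λ K and ξ = M/K + λy/(λx K). -/
open MeasureTheory ProbabilityTheory Real

/-- The exponential integral `Ei`. For `x < 0` the defining integral
`Ei x = -∫_{-x}^∞ e^{-t}/t dt` is a proper integral. -/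
noncomputable def Ei (x : ℝ) : ℝ := -∫ t in Set.Ioi (-x), Real.exp (-t) / t

/-!
Write `T = ZYK + YM + L`. The event is `{Y > Λ}` minus `{Y > Λ, T ≤ X}`, and `P(Y > Λ) = e^{-λy Λ}`.
Given `Y = y`, `P(T ≤ X) = E[e^{-λx T}] = λz e^{-λx (yM + L)} / (λz + λx K y)`, so integrating
against the density of `Y` over `(Λ, ∞)` leaves `λy λz e^{-λx L} ∫_Λ^∞ e^{-a y} / (λz + c y) dy`
with `a = λy + λx M`, `c = λx K`. The substitution `s = (a / c)(λz + c y)` turns this integral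
into `-c⁻¹ e^{a λz / c} Ei(-(a Λ + a λz / c))`, and `a Λ + a λz / c = μ ξ` (`m * ξ` below).
-/

open Set

lemma Ei_nonpos {x : ℝ} (hx : x ≤ 0) : Ei x ≤ 0 := by
  rw [Ei, neg_nonpos]
  refine setIntegral_nonneg measurableSet_Ioi fun t (ht : -x < t) => ?_
  have : 0 < t := by linarith
  positivity

lemma integral_exp_neg_div_affine_Ioi {a c : ℝ} (ha : 0 < a) (hc : 0 < c) (b Λ : ℝ) :
    ∫ y in Ioi Λ, exp (-(a * y)) / (b + c * y)
      = -(c⁻¹ * exp (a * b / c) * Ei (-(a * Λ + a * b / c))) := by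
  have hsub : ∀ y, exp (-(a * y)) / (b + c * y)
      = a / c * exp (a * b / c) * (exp (-(a * y + a * b / c)) / (a * y + a * b / c)) := by
    intro y
    rw [neg_add, exp_add, exp_neg (a * b / c)]
    field_simp
    ring
  have hshift : ∫ s in Ioi (a * Λ), exp (-(s + a * b / c)) / (s + a * b / c)
      = ∫ s in Ioi (a * Λ + a * b / c), exp (-s) / s := by
    have := (measurePreserving_add_right volume (a * b / c)).setIntegral_preimage_emb
      (MeasurableEquiv.addRight (a * b / c)).measurableEmbedding (fun s => exp (-s) / s)
      (Ioi (a * Λ + a * b / c))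
    rwa [preimage_add_const_Ioi, add_sub_cancel_right] at this
  have hscale := integral_comp_mul_left_Ioi
    (fun s => exp (-(s + a * b / c)) / (s + a * b / c)) Λ ha
  simp only [smul_eq_mul] at hscale
  rw [integral_congr_ae (ae_of_all _ hsub), integral_const_mul, hscale, hshift, Ei, neg_neg]
  field_simp

lemma integral_Ioi_mul_exp_neg_mul {r : ℝ} (hr : 0 < r) (c : ℝ) :
    ∫ x in Ioi c, r * exp (-(r * x)) = exp (-(r * c)) := by
  simp only [← neg_mul]
  rw [integral_const_mul, integral_exp_mul_Ioi (neg_neg_of_pos hr)]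
  field_simp

lemma setLIntegral_expMeasure_ofReal {r : ℝ} (hr : 0 < r) {s : Set ℝ} (hs : MeasurableSet s)
    (hs0 : s ⊆ Ici 0) {f : ℝ → ℝ} (hfm : Measurable f) (hf0 : ∀ x ∈ s, 0 ≤ f x)
    (hf1 : ∀ x ∈ s, f x ≤ 1) :
    ∫⁻ x in s, ENNReal.ofReal (f x) ∂expMeasure r
      = ENNReal.ofReal (∫ x in s, r * exp (-(r * x)) * f x) := by
  have hdens : ∀ x ∈ s, exponentialPDF r x * ENNReal.ofReal (f x)
      = ENNReal.ofReal (r * exp (-(r * x)) * f x) := fun x hx => by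
    rw [exponentialPDF_of_nonneg (hs0 hx), ← ENNReal.ofReal_mul (by positivity)]
  have hexp : IntegrableOn (fun x => r * exp (-(r * x))) (Ici 0) := by
    rw [integrableOn_Ici_iff_integrableOn_Ioi]
    have := (exp_neg_integrableOn_Ioi 0 hr).const_mul r
    simp only [neg_mul] at this
    exact this
  have hint : IntegrableOn (fun x => r * exp (-(r * x)) * f x) s := by
    refine (hexp.mono_set hs0).mono' (by fun_prop) ?_
    filter_upwards [ae_restrict_mem hs] with x hx
    rw [norm_mul, Real.norm_of_nonneg (by positivity), Real.norm_of_nonneg (hf0 x hx)]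
    exact mul_le_of_le_one_right (by positivity) (hf1 x hx)
  change ∫⁻ x in s, _ ∂(volume.withDensity (exponentialPDF r)) = _
  rw [setLIntegral_withDensity_eq_setLIntegral_mul (f := exponentialPDF r) _
      (measurable_exponentialPDFReal r).ennreal_ofReal hfm.ennreal_ofReal hs]
  simp only [Pi.mul_apply]
  rw [setLIntegral_congr_fun hs hdens, ofReal_integral_eq_lintegral_ofReal hint]
  filter_upwards [ae_restrict_mem hs] with x hx
  have := hf0 x hx
  have := hs0 hx
  positivity

lemma expMeasure_Ioi {r c : ℝ} (hr : 0 < r) (hc : 0 ≤ c) :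
    expMeasure r (Ioi c) = ENNReal.ofReal (exp (-(r * c))) := by
  rw [← setLIntegral_one, ← ENNReal.ofReal_one, setLIntegral_expMeasure_ofReal hr
    measurableSet_Ioi (fun x hx => hc.trans (le_of_lt hx)) measurable_const
    (fun _ _ => zero_le_one) (fun _ _ => le_rfl)]
  simp only [mul_one, integral_Ioi_mul_exp_neg_mul hr]

lemma expMeasure_Ici {r c : ℝ} (hr : 0 < r) (hc : 0 ≤ c) :
    expMeasure r (Ici c) = ENNReal.ofReal (exp (-(r * c))) := by
  rw [← setLIntegral_one, ← ENNReal.ofReal_one, setLIntegral_expMeasure_ofReal hr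
    measurableSet_Ici (fun x hx => hc.trans hx) measurable_const
    (fun _ _ => zero_le_one) (fun _ _ => le_rfl)]
  simp only [mul_one, integral_Ici_eq_integral_Ioi, integral_Ioi_mul_exp_neg_mul hr]

lemma expMeasure_restrict_Ici_zero (r : ℝ) : (expMeasure r).restrict (Ici 0) = expMeasure r := by
  refine Measure.restrict_eq_self_of_ae_mem ?_
  change ∀ᵐ x ∂(volume.withDensity (exponentialPDF r)), x ∈ Ici 0
  rw [ae_withDensity_iff (f := exponentialPDF r) (measurable_exponentialPDFReal r).ennreal_ofReal]
  filter_upwards with x hx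
  by_contra hneg
  exact hx (exponentialPDF_of_neg (not_le.1 hneg))

lemma expMeasure_prod_affine_le {lz lx α β : ℝ} (hlz : 0 < lz) (hlx : 0 < lx) (hα : 0 ≤ α)
    (hβ : 0 ≤ β) :
    ((expMeasure lz).prod (expMeasure lx)) {q | α * q.1 + β ≤ q.2}
      = ENNReal.ofReal (lz / (lz + lx * α) * exp (-(lx * β))) := by
  have hr : 0 < lz + lx * α := by positivity
  have := isProbabilityMeasure_expMeasure hlx
  rw [Measure.prod_apply (measurableSet_le (by fun_prop) measurable_snd)]
  change ∫⁻ z, expMeasure lx (Ici (α * z + β)) ∂expMeasure lz = _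
  rw [← expMeasure_restrict_Ici_zero lz, setLIntegral_congr_fun measurableSet_Ici
      (fun z (hz : 0 ≤ z) => expMeasure_Ici hlx (by positivity)),
    setLIntegral_expMeasure_ofReal hlz measurableSet_Ici subset_rfl (by fun_prop)
      (fun _ _ => (exp_pos _).le)
      (fun z (hz : 0 ≤ z) => exp_le_one_iff.2 (neg_nonpos.2 (by positivity)))]
  have hmix : ∀ z, lz * exp (-(lz * z)) * exp (-(lx * (α * z + β)))
      = lz / (lz + lx * α) * exp (-(lx * β)) * ((lz + lx * α) * exp (-((lz + lx * α) * z))) := by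
    intro z
    have : -(lz * z) + -(lx * (α * z + β)) = -(lx * β) + -((lz + lx * α) * z) := by ring
    rw [mul_assoc, ← exp_add, this, exp_add]
    field_simp
  simp only [hmix]
  rw [integral_const_mul, integral_Ici_eq_integral_Ioi, integral_Ioi_mul_exp_neg_mul hr, mul_zero,
    neg_zero, exp_zero, mul_one]

lemma expMeasure_prod_prod_affine_le {ly lz lx K M L Λ : ℝ} (hly : 0 < ly) (hlz : 0 < lz)
    (hlx : 0 < lx) (hK : 0 ≤ K) (hM : 0 ≤ M) (hL : 0 ≤ L) (hΛ : 0 ≤ Λ) :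
    ((expMeasure ly).prod ((expMeasure lz).prod (expMeasure lx)))
        {p | Λ < p.1 ∧ p.1 * K * p.2.1 + (p.1 * M + L) ≤ p.2.2}
      = ENNReal.ofReal (ly * lz * exp (-(lx * L))
          * ∫ y in Ioi Λ, exp (-((ly + lx * M) * y)) / (lz + lx * K * y)) := by
  have := isProbabilityMeasure_expMeasure hly
  have := isProbabilityMeasure_expMeasure hlz
  have := isProbabilityMeasure_expMeasure hlx
  set C : Set (ℝ × ℝ × ℝ) := {p | p.1 * K * p.2.1 + (p.1 * M + L) ≤ p.2.2}
  have hC : MeasurableSet C := measurableSet_le (by fun_prop) (by fun_prop)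
  have hD : {p : ℝ × ℝ × ℝ | Λ < p.1 ∧ p.1 * K * p.2.1 + (p.1 * M + L) ≤ p.2.2}
      = C ∩ Ioi Λ ×ˢ univ := by
    ext p
    simp [C, and_comm]
  rw [hD, ← Measure.restrict_apply hC, ← Measure.restrict_prod_eq_prod_univ,
    Measure.prod_apply hC]
  change ∫⁻ y in Ioi Λ, ((expMeasure lz).prod (expMeasure lx))
    {q | y * K * q.1 + (y * M + L) ≤ q.2} ∂expMeasure ly = _
  have hpos : ∀ y ∈ Ioi Λ, 0 ≤ y := fun y hy => hΛ.trans (le_of_lt hy)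
  rw [setLIntegral_congr_fun measurableSet_Ioi (fun y hy => by
      have := hpos y hy
      exact expMeasure_prod_affine_le (α := y * K) (β := y * M + L) hlz hlx (by positivity)
        (by positivity))]
  rw [setLIntegral_expMeasure_ofReal hly measurableSet_Ioi hpos (by fun_prop)
    (fun y hy => by have := hpos y hy; positivity) (fun y hy => by
      have := hpos y hy
      exact mul_le_one₀ (div_le_one_of_le₀ (le_add_of_nonneg_right (by positivity))
        (by positivity)) (exp_pos _).le (exp_le_one_iff.2 (neg_nonpos.2 (by positivity))))]
  rw [← integral_const_mul]
  congr 1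
  refine setIntegral_congr_fun measurableSet_Ioi fun y (hy : Λ < y) => ?_
  have hexp : exp (-(ly * y)) * exp (-(lx * (y * M + L)))
      = exp (-(lx * L)) * exp (-((ly + lx * M) * y)) := by
    rw [← exp_add, ← exp_add]
    ring_nf
  rw [show lx * (y * K) = lx * K * y by ring, div_mul_eq_mul_div, mul_div_assoc', mul_div_assoc']
  congr 1
  linear_combination (ly * lz) * hexp

lemma ProbabilityTheory.iIndepFun.map_prodMk_prodMk_eq {Ω β : Type*} [MeasurableSpace Ω]
    [MeasurableSpace β] {μ : Measure Ω} [IsProbabilityMeasure μ] {X Y Z : Ω → β}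
    (hX : Measurable X) (hY : Measurable Y) (hZ : Measurable Z) (hind : iIndepFun ![X, Y, Z] μ) :
    μ.map (fun ω => (Y ω, (Z ω, X ω))) = (μ.map Y).prod ((μ.map Z).prod (μ.map X)) := by
  have hmeas : ∀ i, Measurable (![X, Y, Z] i) := by
    intro i
    fin_cases i <;> assumption
  have hZX : IndepFun Z X μ := hind.indepFun (show (2 : Fin 3) ≠ 0 by decide)
  have hY_ZX : IndepFun Y (fun ω => (Z ω, X ω)) μ :=
    (hind.indepFun_prodMk hmeas 2 0 1 (by decide) (by decide)).symm
  rw [(indepFun_iff_map_prod_eq_prod_map_map hY.aemeasurable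
      (hZ.prodMk hX).aemeasurable).mp hY_ZX,
    (indepFun_iff_map_prod_eq_prod_map_map hZ.aemeasurable hX.aemeasurable).mp hZX]

theorem stmt3
    {Ω : Type*} [MeasurableSpace Ω] (μ : Measure Ω) [IsProbabilityMeasure μ]
    (X Y Z : Ω → ℝ) (hX : Measurable X) (hY : Measurable Y) (hZ : Measurable Z)
    (hind : iIndepFun ![X, Y, Z] μ)
    (lx ly lz : ℝ) (hlx : 0 < lx) (hly : 0 < ly) (hlz : 0 < lz)
    (hXlaw : Measure.map X μ = expMeasure lx)
    (hYlaw : Measure.map Y μ = expMeasure ly)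
    (hZlaw : Measure.map Z μ = expMeasure lz)
    (K M L Λ : ℝ) (hK : 0 < K) (hM : 0 ≤ M) (hL : 0 ≤ L) (hΛ : 0 < Λ)
    (m ξ : ℝ) (hm : m = lz + lx * Λ * K) (hξ : ξ = M / K + ly / (lx * K)) :
    μ {ω | X ω < Z ω * Y ω * K + Y ω * M + L ∧ Y ω > Λ}
      = ENNReal.ofReal (Real.exp (-ly * Λ)
          + (ly * lz) / (lx * K) * Real.exp (-lx * (L + Λ * M) - ly * Λ)
            * Real.exp (m * ξ) * Ei (-(m * ξ))) := by
  set D : Set (ℝ × ℝ × ℝ) := {p | Λ < p.1 ∧ p.1 * K * p.2.1 + (p.1 * M + L) ≤ p.2.2}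
  have hD : MeasurableSet D :=
    (measurableSet_lt measurable_const measurable_fst).inter
      (measurableSet_le (f := fun p : ℝ × ℝ × ℝ => p.1 * K * p.2.1 + (p.1 * M + L))
        (by fun_prop) (by fun_prop))
  have hYZX : Measurable fun ω => (Y ω, (Z ω, X ω)) := hY.prodMk (hZ.prodMk hX)
  have hevent : {ω | X ω < Z ω * Y ω * K + Y ω * M + L ∧ Y ω > Λ}
      = Y ⁻¹' Ioi Λ \ (fun ω => (Y ω, (Z ω, X ω))) ⁻¹' D := by
    ext ω
    simp only [D, mem_ofPred_eq, mem_sdiff, mem_preimage, mem_Ioi, not_and, not_le]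
    rw [show Y ω * K * Z ω + (Y ω * M + L) = Z ω * Y ω * K + Y ω * M + L by ring]
    tauto
  have hmξ : m * ξ = (ly + lx * M) * Λ + (ly + lx * M) * lz / (lx * K) := by
    subst hm hξ
    field_simp
    ring
  have hexp : exp (-lx * (L + Λ * M) - ly * Λ) * exp (m * ξ)
      = exp (-(lx * L)) * exp ((ly + lx * M) * lz / (lx * K)) := by
    rw [hmξ, ← exp_add, ← exp_add]
    ring_nf
  have hEi : Ei (-(m * ξ)) ≤ 0 := Ei_nonpos (neg_nonpos.2 (by rw [hmξ]; positivity))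
  rw [hevent, measure_sdiff (s₁ := Y ⁻¹' Ioi Λ) (fun _ h => h.1) (hYZX hD).nullMeasurableSet
      (measure_ne_top _ _),
    ← Measure.map_apply hY measurableSet_Ioi, ← Measure.map_apply hYZX hD,
    hind.map_prodMk_prodMk_eq hX hY hZ, hXlaw, hYlaw, hZlaw, expMeasure_Ioi hly hΛ.le,
    expMeasure_prod_prod_affine_le hly hlz hlx hK.le hM hL hΛ.le,
    integral_exp_neg_div_affine_Ioi (by positivity) (by positivity), ← hmξ,
    ← ENNReal.ofReal_sub _ (mul_nonneg (by positivity)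
      (neg_nonneg.2 (mul_nonpos_of_nonneg_of_nonpos (by positivity) hEi)))]
  congr 1
  rw [neg_mul]
  linear_combination (-(ly * lz / (lx * K) * Ei (-(m * ξ)))) * hexp
end

section
/- Let X ~ Exp(λx), Y ~ Exp(λy), Z ~ Exp(λz) be independent, and let K_Δ, M_Δ, K_Υ, M_Υ > 0, L ≥ 0, Λ > 0. Then Pr[X < Z K_Δ + M_Δ + L, Y < Λ] + Pr[X < Z Y K_Υ + Y M_Υ + L, Y > Λ] = 1 − (λz e^{−λx(M_Δ+L)}/(λz + λx K_Δ))(1 − e^{−λy Λ}) + (λy λz Ei(−μξ)/(λx K_Υ)) e^{−Λ(λy + λx M_Υ) − λx L + μξ}, where μ = λz + λx Λ K_Υ and ξ = M_Υ/K_Υ + λy/(λx K_Υ). -/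
open MeasureTheory ProbabilityTheory Real

/-!
Both probabilities are computed by conditioning on `(Y, Z)`: given `Y = y, Z = z` the event is
`X < z K + C` with `K, C ≥ 0` depending on `y`, of probability `1 - e^{-λx (z K + C)}`, and
averaging over `Z` turns this into `1 - λz e^{-λx C} / (λz + λx K)`. For `Y < Λ` the conditional
probability does not depend on `y`, which gives the product term. For `Y > Λ` we have `K = y KΥ`,
and the remaining integral over `y` of `e^{-(λy + λx MΥ) y} / (λz + λx KΥ y)` becomes, after the
substitution `t = ξ (λz + λx KΥ y)`, the tail `∫_{m ξ}^∞ e^{-t}/t dt = -Ei(-m ξ)`.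
-/

open Set

theorem integral_exp_neg_mul_Ioi {b : ℝ} (hb : 0 < b) (a : ℝ) :
    ∫ x in Ioi a, exp (-(b * x)) = exp (-(b * a)) / b := by
  simpa [div_neg, neg_div] using integral_exp_mul_Ioi (neg_neg_of_pos hb) a

theorem integrableOn_exp_neg_mul_Ioi {b : ℝ} (hb : 0 < b) (a : ℝ) :
    IntegrableOn (fun x => exp (-(b * x))) (Ioi a) := by
  simpa only [neg_mul] using exp_neg_integrableOn_Ioi a hb

theorem integral_comp_add_right_Ioi {E : Type*} [NormedAddCommGroup E] [NormedSpace ℝ E]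
    (f : ℝ → E) (a d : ℝ) :
    ∫ x in Ioi a, f (x + d) = ∫ x in Ioi (a + d), f x := by
  simpa using (measurePreserving_add_right volume d).setIntegral_preimage_emb
    (measurableEmbedding_addRight d) f (Ioi (a + d))

theorem integral_Ioi_exp_neg_mul_div_affine {c d ξ : ℝ} (hd : 0 < d) (hξ : 0 < ξ) (Λ : ℝ) :
    ∫ y in Ioi Λ, exp (-(d * ξ * y)) / (c + d * y)
      = -(exp (ξ * c) * Ei (-((c + d * Λ) * ξ)) / d) := by
  have hsubst : ∀ y, exp (-(d * ξ * y)) / (c + d * y)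
      = ξ * exp (ξ * c) * (exp (-(ξ * d * y + ξ * c)) / (ξ * d * y + ξ * c)) := by
    intro y
    rw [show ξ * d * y + ξ * c = ξ * (c + d * y) by ring,
      show -(ξ * (c + d * y)) = -(d * ξ * y) + -(ξ * c) by ring, exp_add, exp_neg (ξ * c)]
    rcases eq_or_ne (c + d * y) 0 with h | h
    · simp [h]
    · field_simp
  simp_rw [hsubst]
  rw [integral_const_mul,
    integral_comp_mul_left_Ioi (fun u => exp (-(u + ξ * c)) / (u + ξ * c)) Λ (by positivity),
    integral_comp_add_right_Ioi (fun t => exp (-t) / t), Ei, neg_neg, smul_eq_mul,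
    show ξ * d * Λ + ξ * c = (c + d * Λ) * ξ by ring]
  field_simp

instance nullSingletonClass_expMeasure (r : ℝ) : NullSingletonClass (expMeasure r) :=
  inferInstanceAs (NullSingletonClass (volume.withDensity (gammaPDF 1 r)))

theorem setIntegral_expMeasure {r : ℝ} (hr : 0 < r) {s : Set ℝ} (hs : MeasurableSet s)
    (f : ℝ → ℝ) :
    ∫ x in s, f x ∂expMeasure r = ∫ x in s ∩ Ici 0, r * exp (-(r * x)) * f x := by
  have hdensity : ∀ x, (exponentialPDF r x).toReal • f x
      = (Ici 0).indicator (fun x => r * exp (-(r * x)) * f x) x := by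
    intro x
    by_cases hx : 0 ≤ x
    · rw [exponentialPDF_of_nonneg hx, ENNReal.toReal_ofReal (by positivity),
        indicator_of_mem (mem_Ici.mpr hx), smul_eq_mul]
    · rw [exponentialPDF_of_neg (not_le.mp hx), indicator_of_notMem (by simpa using hx)]
      simp
  change ∫ x in s, f x ∂volume.withDensity (exponentialPDF r) = _
  rw [restrict_withDensity hs, integral_withDensity_eq_integral_toReal_smul (f := exponentialPDF r)
    (measurable_exponentialPDFReal r).ennreal_ofReal (ae_of_all _ fun _ => ENNReal.ofReal_lt_top)]
  simp_rw [hdensity]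
  exact setIntegral_indicator measurableSet_Ici

theorem measureReal_expMeasure_Iio {r : ℝ} (hr : 0 < r) {c : ℝ} (hc : 0 ≤ c) :
    (expMeasure r).real (Iio c) = 1 - exp (-(r * c)) := by
  have := isProbabilityMeasure_expMeasure hr
  rw [measureReal_congr Iio_ae_eq_Iic, ← cdf_eq_real, cdf_expMeasure_eq hr, if_pos hc]

theorem integral_cdf_expMeasure_mul_add {a r K C : ℝ} (ha : 0 < a) (hr : 0 < r) (hK : 0 ≤ K)
    (hC : 0 ≤ C) :
    ∫ z, cdf (expMeasure a) (z * K + C) ∂expMeasure r = 1 - r * exp (-(a * C)) / (r + a * K) := by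
  have hrK : 0 < r + a * K := by positivity
  have hintegrand : ∀ z ∈ Ioi (0 : ℝ), r * exp (-(r * z)) * cdf (expMeasure a) (z * K + C)
      = r * exp (-(r * z)) - r * exp (-(a * C)) * exp (-((r + a * K) * z)) := by
    intro z hz
    rw [cdf_expMeasure_eq ha, if_pos (by positivity [le_of_lt (mem_Ioi.mp hz)]), mul_sub,
      mul_one, mul_assoc, ← exp_add, mul_assoc, ← exp_add]
    ring_nf
  rw [← setIntegral_univ, setIntegral_expMeasure hr MeasurableSet.univ, univ_inter,
    integral_Ici_eq_integral_Ioi, setIntegral_congr_fun measurableSet_Ioi hintegrand,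
    integral_sub ((integrableOn_exp_neg_mul_Ioi hr 0).const_mul r)
      ((integrableOn_exp_neg_mul_Ioi hrK 0).const_mul _),
    integral_const_mul, integral_const_mul, integral_exp_neg_mul_Ioi hr,
    integral_exp_neg_mul_Ioi hrK]
  field_simp
  simp

theorem setIntegral_expMeasure_Ioi_one_sub_exp_div {r a c d M L Λ ξ : ℝ} (hr : 0 < r)
    (ha : 0 < a) (hc : 0 < c) (hd : 0 < d) (hM : 0 ≤ M) (hΛ : 0 ≤ Λ)
    (hξ : a * d * ξ = r + a * M) :
    ∫ y in Ioi Λ, (1 - c * exp (-(a * (y * M + L))) / (c + a * (y * d))) ∂expMeasure r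
      = exp (-(r * Λ))
        + r * c * exp (-(a * L)) * exp (ξ * c) * Ei (-((c + a * d * Λ) * ξ)) / (a * d) := by
  have had : 0 < a * d := mul_pos ha hd
  have hξpos : 0 < ξ := pos_of_mul_pos_right (hξ ▸ by positivity) had.le
  have hintegrand : ∀ y ∈ Ioi Λ,
      r * exp (-(r * y)) * (1 - c * exp (-(a * (y * M + L))) / (c + a * (y * d)))
        = r * exp (-(r * y))
          - r * c * exp (-(a * L)) * (exp (-(a * d * ξ * y)) / (c + a * d * y)) := by
    intro y _
    have hexp : exp (-(r * y)) * exp (-(a * (y * M + L)))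
        = exp (-(a * L)) * exp (-((r + a * M) * y)) := by
      rw [← exp_add, ← exp_add]; ring_nf
    rw [hξ, show c + a * (y * d) = c + a * d * y by ring]
    linear_combination (-(r * c) / (c + a * d * y)) * hexp
  have hintegrable :
      IntegrableOn (fun y => exp (-(a * d * ξ * y)) / (c + a * d * y)) (Ioi Λ) := by
    have hinv : ∀ᵐ y ∂volume.restrict (Ioi Λ), ‖(c + a * d * y)⁻¹‖ ≤ c⁻¹ := by
      refine (ae_restrict_iff' measurableSet_Ioi).mpr (ae_of_all _ fun y hy => ?_)
      have hy : 0 ≤ a * d * y := mul_nonneg had.le (hΛ.trans (le_of_lt hy))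
      rw [norm_inv, Real.norm_of_nonneg (by positivity)]
      exact inv_anti₀ hc (le_add_of_nonneg_right hy)
    simpa only [IntegrableOn, div_eq_inv_mul] using
      (integrableOn_exp_neg_mul_Ioi (by positivity) Λ).bdd_mul (by fun_prop) hinv
  rw [setIntegral_expMeasure hr measurableSet_Ioi, inter_eq_left.mpr (Ioi_subset_Ici hΛ),
    setIntegral_congr_fun measurableSet_Ioi hintegrand,
    integral_sub ((integrableOn_exp_neg_mul_Ioi hr Λ).const_mul r) (hintegrable.const_mul _),
    integral_const_mul, integral_const_mul, integral_exp_neg_mul_Ioi hr,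
    integral_Ioi_exp_neg_mul_div_affine had hξpos]
  field_simp
  ring

theorem measure_lt_and_mem_eq_setLIntegral {Ω β : Type*} [MeasurableSpace Ω] [MeasurableSpace β]
    {μ : Measure Ω} [IsFiniteMeasure μ] {X : Ω → ℝ} {W : Ω → β} (hX : Measurable X)
    (hW : Measurable W) (hXW : IndepFun X W μ) {g : β → ℝ} (hg : Measurable g) {T : Set β}
    (hT : MeasurableSet T) :
    μ {ω | X ω < g (W ω) ∧ W ω ∈ T} = ∫⁻ w in T, μ.map X (Iio (g w)) ∂μ.map W := by
  let S := {p : ℝ × β | p.1 < g p.2 ∧ p.2 ∈ T}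
  have hS : MeasurableSet S :=
    (measurableSet_lt measurable_fst (hg.comp measurable_snd)).inter (measurable_snd hT)
  have hslice : ∀ w,
      μ.map X ((fun x => (x, w)) ⁻¹' S) = T.indicator (fun w => μ.map X (Iio (g w))) w := by
    intro w
    by_cases hw : w ∈ T <;> simp [S, hw, Iio]
  calc μ {ω | X ω < g (W ω) ∧ W ω ∈ T}
      = μ.map (fun ω => (X ω, W ω)) S := (Measure.map_apply (hX.prodMk hW) hS).symm
    _ = ((μ.map X).prod (μ.map W)) S := by
      rw [(indepFun_iff_map_prod_eq_prod_map_map hX.aemeasurable hW.aemeasurable).mp hXW]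
    _ = ∫⁻ w in T, μ.map X (Iio (g w)) ∂μ.map W := by
      rw [Measure.prod_apply_symm hS, ← lintegral_indicator hT]
      simp_rw [hslice]

theorem measureReal_lt_and_mem_eq_setIntegral_cdf {Ω β : Type*} [MeasurableSpace Ω]
    [MeasurableSpace β] {μ : Measure Ω} [IsProbabilityMeasure μ] {X : Ω → ℝ} {W : Ω → β}
    (hX : Measurable X) (hW : Measurable W) (hXW : IndepFun X W μ)
    [NullSingletonClass (μ.map X)] {g : β → ℝ} (hg : Measurable g) {T : Set β}
    (hT : MeasurableSet T) :
    μ.real {ω | X ω < g (W ω) ∧ W ω ∈ T} = ∫ w in T, cdf (μ.map X) (g w) ∂μ.map W := by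
  have := Measure.isProbabilityMeasure_map (μ := μ) hX.aemeasurable
  rw [measureReal_def, measure_lt_and_mem_eq_setLIntegral hX hW hXW hg hT,
    integral_eq_lintegral_of_nonneg_ae (ae_of_all _ fun w => cdf_nonneg _ _)
      ((cdf _).mono.measurable.comp hg).aestronglyMeasurable]
  simp_rw [ofReal_cdf, measure_congr Iio_ae_eq_Iic]

theorem measureReal_lt_and_mem_eq_setIntegral_integral_cdf {Ω : Type*} [MeasurableSpace Ω]
    {μ : Measure Ω} [IsProbabilityMeasure μ] {X Y Z : Ω → ℝ} (hX : Measurable X)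
    (hY : Measurable Y) (hZ : Measurable Z) (hind : iIndepFun ![X, Y, Z] μ)
    [NullSingletonClass (μ.map X)] {g : ℝ → ℝ → ℝ} (hg : Measurable (Function.uncurry g))
    {T : Set ℝ} (hT : MeasurableSet T) :
    μ.real {ω | X ω < g (Y ω) (Z ω) ∧ Y ω ∈ T}
      = ∫ y in T, ∫ z, cdf (μ.map X) (g y z) ∂μ.map Z ∂μ.map Y := by
  have hmeas : ∀ i, Measurable (![X, Y, Z] i) := by
    intro i; fin_cases i <;> simpa
  have hXYZ : IndepFun X (fun ω => (Y ω, Z ω)) μ := by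
    simpa using (hind.indepFun_prodMk hmeas 1 2 0 (by decide) (by decide)).symm
  have hYZ : μ.map (fun ω => (Y ω, Z ω)) = (μ.map Y).prod (μ.map Z) :=
    (indepFun_iff_map_prod_eq_prod_map_map hY.aemeasurable hZ.aemeasurable).mp
      (by simpa using hind.indepFun (show (1 : Fin 3) ≠ 2 by decide))
  have := Measure.isProbabilityMeasure_map (μ := μ) hY.aemeasurable
  have := Measure.isProbabilityMeasure_map (μ := μ) hZ.aemeasurable
  have hintegrable : Integrable (fun p => cdf (μ.map X) (Function.uncurry g p))
      (((μ.map Y).prod (μ.map Z)).restrict (T ×ˢ univ)) :=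
    .of_bound ((cdf _).mono.measurable.comp hg).aestronglyMeasurable 1
      (ae_of_all _ fun _ => by simp [abs_of_nonneg (cdf_nonneg _ _), cdf_le_one])
  have h := measureReal_lt_and_mem_eq_setIntegral_cdf hX (hY.prodMk hZ) hXYZ hg
    (hT.prod MeasurableSet.univ)
  rw [hYZ, setIntegral_prod _ hintegrable, Measure.restrict_univ] at h
  simpa using h

theorem stmt6
    {Ω : Type*} [MeasurableSpace Ω] (μ : Measure Ω) [IsProbabilityMeasure μ]
    (X Y Z : Ω → ℝ) (hX : Measurable X) (hY : Measurable Y) (hZ : Measurable Z)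
    (hind : iIndepFun ![X, Y, Z] μ)
    (lx ly lz : ℝ) (hlx : 0 < lx) (hly : 0 < ly) (hlz : 0 < lz)
    (hXlaw : Measure.map X μ = expMeasure lx)
    (hYlaw : Measure.map Y μ = expMeasure ly)
    (hZlaw : Measure.map Z μ = expMeasure lz)
    (KΔ MΔ KΥ MΥ L Λ : ℝ) (hKΔ : 0 < KΔ) (hMΔ : 0 < MΔ) (hKΥ : 0 < KΥ)
    (hMΥ : 0 < MΥ) (hL : 0 ≤ L) (hΛ : 0 < Λ)
    (m ξ : ℝ) (hm : m = lz + lx * Λ * KΥ) (hξ : ξ = MΥ / KΥ + ly / (lx * KΥ)) :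
    (μ {ω | X ω < Z ω * KΔ + MΔ + L ∧ Y ω < Λ}).toReal
      + (μ {ω | X ω < Z ω * Y ω * KΥ + Y ω * MΥ + L ∧ Y ω > Λ}).toReal
      = 1 - (lz * Real.exp (-lx * (MΔ + L)) / (lz + lx * KΔ)) * (1 - Real.exp (-ly * Λ))
        + (ly * lz * Ei (-(m * ξ)) / (lx * KΥ))
            * Real.exp (-Λ * (ly + lx * MΥ) - lx * L + m * ξ) := by
  have : NullSingletonClass (μ.map X) := hXlaw ▸ inferInstance
  have hP1 := measureReal_lt_and_mem_eq_setIntegral_integral_cdf hX hY hZ hind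
    (g := fun _ z => z * KΔ + (MΔ + L)) (by fun_prop) (measurableSet_Iio (a := Λ))
  have hP2 := measureReal_lt_and_mem_eq_setIntegral_integral_cdf hX hY hZ hind
    (g := fun y z => z * (y * KΥ) + (y * MΥ + L)) (by fun_prop) (measurableSet_Ioi (a := Λ))
  rw [hXlaw, hYlaw, hZlaw, integral_cdf_expMeasure_mul_add hlx hlz hKΔ.le (by positivity),
    setIntegral_const, measureReal_expMeasure_Iio hly hΛ.le, smul_eq_mul] at hP1
  rw [hXlaw, hYlaw, hZlaw, setIntegral_congr_fun measurableSet_Ioi fun (y : ℝ) hy =>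
      have hy0 : 0 < y := hΛ.trans hy
      integral_cdf_expMeasure_mul_add hlx hlz (by positivity) (by positivity),
    setIntegral_expMeasure_Ioi_one_sub_exp_div hly hlx hlz hKΥ hMΥ.le hΛ.le
      (ξ := ξ) (by rw [hξ]; field_simp; ring),
    show (lz + lx * KΥ * Λ) * ξ = m * ξ by rw [hm]; ring] at hP2
  have hexponent : -Λ * (ly + lx * MΥ) - lx * L + m * ξ = -(lx * L) + ξ * lz := by
    rw [hm, hξ]; field_simp; ring
  rw [hexponent, exp_add]
  simp only [mem_Iio, mem_Ioi] at hP1 hP2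
  simp only [← measureReal_def, gt_iff_lt, add_assoc, mul_assoc, neg_mul]
  rw [hP1, hP2]
  ring
end
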